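/- Let m, n be positive integers, ε, η nonnegative integers, and d := ε+η+1. Let Λ_k(λ) denote the column vector (λ^k, …, λ², λ, 1)ᵀ of size k+1. (i) If M(λ) is an (η+1)m×(ε+1)n pencil and Q(λ) := (Λ_η(λ)⊗I_m)ᵀ · M(λ) · (Λ_ε(λ)⊗I_n) (a polynomial matrix of degree at most d), then ‖Q(λ)‖_F ≤ √(2·min(ε+1, η+1)) · ‖M(λ)‖_F. (ii) For every m×n polynomial matrix Q(λ) of degree at most d there exists an (η+1)m×(ε+1)n pencil M(λ) with Q(λ) = (Λ_η(λ)⊗I_m)ᵀ · M(λ) · (Λ_ε(λ)⊗I_n) and ‖M(λ)‖_F = ‖Q(λ)‖_F. (iii) Every pencil M(λ) satisfying Q(λ) = (Λ_η(λ)⊗I_m)ᵀ · M(λ) · (Λ_ε(λ)⊗I_n) satisfies ‖M(λ)‖_F ≥ ‖Q(λ)‖_F/√(2d). -/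

import Mathlib

open Matrix
open scoped Kronecker

noncomputable section

/-- The `k × (k+1)` matrix `E_k = [I_k 0]`. -/
def Ek (𝕜 : Type*) [RCLike 𝕜] (k : ℕ) : Matrix (Fin k) (Fin (k+1)) 𝕜 :=
  Matrix.of fun i j => if (j : ℕ) = (i : ℕ) then 1 else 0

/-- The `k × (k+1)` matrix `F_k = [0 I_k]`. -/
def Fk (𝕜 : Type*) [RCLike 𝕜] (k : ℕ) : Matrix (Fin k) (Fin (k+1)) 𝕜 :=
  Matrix.of fun i j => if (j : ℕ) = (i : ℕ) + 1 then 1 else 0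

/-- The standard unit vector `(0, …, 0, 1)ᵀ` of size `k+1`. -/
def evec (𝕜 : Type*) [RCLike 𝕜] (k : ℕ) : Fin (k+1) → 𝕜 :=
  fun i => if (i : ℕ) = k then 1 else 0

variable {𝕜 : Type*} [RCLike 𝕜]

/-- Frobenius norm of a matrix. -/
def frobNorm {p q : Type*} [Fintype p] [Fintype q] (M : Matrix p q 𝕜) : ℝ :=
  Real.sqrt (∑ i, ∑ j, ‖M i j‖ ^ 2)

/-- Spectral norm (largest singular value) of a matrix. -/
def specNorm {p q : Type*} [Fintype p] [Fintype q] [DecidableEq p] (M : Matrix p q 𝕜) : ℝ :=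
  Real.sqrt (⨆ i, (Matrix.isHermitian_mul_conjTranspose_self M).eigenvalues i)

/-- Smallest singular value of a `p × q` matrix with `p ≤ q`
(the `p`-th largest singular value). -/
def sigmaMin {p q : Type*} [Fintype p] [Fintype q] [DecidableEq p] (M : Matrix p q 𝕜) : ℝ :=
  Real.sqrt (⨅ i, (Matrix.isHermitian_mul_conjTranspose_self M).eigenvalues i)

/-- Euclidean norm of a vector. -/
def vecNorm {q : Type*} [Fintype q] (x : q → 𝕜) : ℝ :=
  Real.sqrt (∑ i, ‖x i‖ ^ 2)

/-- Frobenius norm of the pencil `P.1 - λ • P.2`. -/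
def pFrob {p q : Type*} [Fintype p] [Fintype q] (P : Matrix p q 𝕜 × Matrix p q 𝕜) : ℝ :=
  Real.sqrt (frobNorm P.1 ^ 2 + frobNorm P.2 ^ 2)

/-- Spectral norm of the pencil `P.1 - λ • P.2`. -/
def pSpec {p q : Type*} [Fintype p] [Fintype q] [DecidableEq p]
    (P : Matrix p q 𝕜 × Matrix p q 𝕜) : ℝ :=
  Real.sqrt (specNorm P.1 ^ 2 + specNorm P.2 ^ 2)

/-- A 3×3 block matrix. -/
def blocks3 {R1 R2 R3 C1 C2 C3 : Type*}
    (M11 : Matrix R1 C1 𝕜) (M12 : Matrix R1 C2 𝕜) (M13 : Matrix R1 C3 𝕜)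
    (M21 : Matrix R2 C1 𝕜) (M22 : Matrix R2 C2 𝕜) (M23 : Matrix R2 C3 𝕜)
    (M31 : Matrix R3 C1 𝕜) (M32 : Matrix R3 C2 𝕜) (M33 : Matrix R3 C3 𝕜) :
    Matrix (R1 ⊕ (R2 ⊕ R3)) (C1 ⊕ (C2 ⊕ C3)) 𝕜 :=
  Matrix.fromBlocks M11 (Matrix.fromCols M12 M13) (Matrix.fromRows M21 M31)
    (Matrix.fromBlocks M22 M23 M32 M33)

/-- `K̂₂ᵀ C = (e_{η+1} ⊗ I_m) C`. -/
def colUnit {m ℓ : ℕ} (η : ℕ) (C : Matrix (Fin m) (Fin ℓ) 𝕜) :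
    Matrix (Fin (η+1) × Fin m) (Fin ℓ) 𝕜 :=
  Matrix.of fun i j => evec 𝕜 η i.1 * C i.2 j

/-- `B K̂₁ = B (e_{ε+1}ᵀ ⊗ I_n)`. -/
def rowUnit {n ℓ : ℕ} (ε : ℕ) (B : Matrix (Fin ℓ) (Fin n) 𝕜) :
    Matrix (Fin ℓ) (Fin (ε+1) × Fin n) 𝕜 :=
  Matrix.of fun i j => evec 𝕜 ε j.1 * B i j.2

/-- Row index type of a block Kronecker pencil. -/
abbrev SRow (m ℓ ε η n : ℕ) := (Fin (η+1) × Fin m) ⊕ (Fin ℓ ⊕ (Fin ε × Fin n))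

/-- Column index type of a block Kronecker pencil. -/
abbrev SCol (m ℓ ε η n : ℕ) := (Fin (ε+1) × Fin n) ⊕ (Fin ℓ ⊕ (Fin η × Fin m))

/-- The block Kronecker pencil
`S(λ) = [[M(λ), K̂₂ᵀC, K₂ᵀ(λ)], [BK̂₁, A-λI, 0], [K₁(λ), 0, 0]]`
represented as a pair `(Sa, Sb)` with `S(λ) = Sa - λ Sb`. -/
def blockKron (m n ℓ ε η : ℕ) (A : Matrix (Fin ℓ) (Fin ℓ) 𝕜) (B : Matrix (Fin ℓ) (Fin n) 𝕜)
    (C : Matrix (Fin m) (Fin ℓ) 𝕜)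
    (M : Matrix (Fin (η+1) × Fin m) (Fin (ε+1) × Fin n) 𝕜 ×
         Matrix (Fin (η+1) × Fin m) (Fin (ε+1) × Fin n) 𝕜) :
    Matrix (SRow m ℓ ε η n) (SCol m ℓ ε η n) 𝕜 × Matrix (SRow m ℓ ε η n) (SCol m ℓ ε η n) 𝕜 :=
  (blocks3 M.1 (colUnit η C) ((Ek 𝕜 η)ᵀ ⊗ₖ (1 : Matrix (Fin m) (Fin m) 𝕜))
      (rowUnit ε B) A 0
      (Ek 𝕜 ε ⊗ₖ (1 : Matrix (Fin n) (Fin n) 𝕜)) 0 0,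
   blocks3 M.2 0 ((Fk 𝕜 η)ᵀ ⊗ₖ (1 : Matrix (Fin m) (Fin m) 𝕜))
      0 1 0
      (Fk 𝕜 ε ⊗ₖ (1 : Matrix (Fin n) (Fin n) 𝕜)) 0 0)

/-- Row index type of the matrix `T`. -/
abbrev TRow (m ℓ ε η n : ℕ) :=
  (((Fin η × Fin m) × Fin ℓ) ⊕ ((Fin η × Fin m) × Fin ℓ)) ⊕
  (((Fin ℓ × (Fin ε × Fin n)) ⊕ (Fin ℓ × (Fin ε × Fin n))) ⊕
   (((Fin η × Fin m) × (Fin ε × Fin n)) ⊕ ((Fin η × Fin m) × (Fin ε × Fin n))))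

/-- Column index type of the matrix `T`. -/
abbrev TCol (m ℓ ε η n : ℕ) :=
  (((Fin (η+1) × Fin m) × Fin ℓ) ⊕ ((Fin η × Fin m) × Fin ℓ)) ⊕
  (((Fin ℓ × (Fin ε × Fin n)) ⊕ (Fin ℓ × (Fin (ε+1) × Fin n))) ⊕
   (((Fin (η+1) × Fin m) × (Fin ε × Fin n)) ⊕ ((Fin η × Fin m) × (Fin (ε+1) × Fin n))))

/-- The 6×6 block matrix `T`. -/
def Tmat (m n ℓ ε η : ℕ) (A : Matrix (Fin ℓ) (Fin ℓ) 𝕜) (B : Matrix (Fin ℓ) (Fin n) 𝕜)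
    (C : Matrix (Fin m) (Fin ℓ) 𝕜) : Matrix (TRow m ℓ ε η n) (TCol m ℓ ε η n) 𝕜 :=
  Matrix.fromRows
    (Matrix.fromCols
      (Matrix.fromBlocks
        ((Ek 𝕜 η ⊗ₖ (1 : Matrix (Fin m) (Fin m) 𝕜)) ⊗ₖ (1 : Matrix (Fin ℓ) (Fin ℓ) 𝕜))
        ((1 : Matrix (Fin η × Fin m) (Fin η × Fin m) 𝕜) ⊗ₖ A)
        ((Fk 𝕜 η ⊗ₖ (1 : Matrix (Fin m) (Fin m) 𝕜)) ⊗ₖ (1 : Matrix (Fin ℓ) (Fin ℓ) 𝕜))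
        ((1 : Matrix (Fin η × Fin m) (Fin η × Fin m) 𝕜) ⊗ₖ (1 : Matrix (Fin ℓ) (Fin ℓ) 𝕜)))
      (Matrix.fromCols 0
        (Matrix.fromBlocks 0
          ((1 : Matrix (Fin η × Fin m) (Fin η × Fin m) 𝕜) ⊗ₖ (rowUnit ε B))
          0 0)))
    (Matrix.fromRows
      (Matrix.fromCols 0
        (Matrix.fromCols
          (Matrix.fromBlocks
            (Aᵀ ⊗ₖ (1 : Matrix (Fin ε × Fin n) (Fin ε × Fin n) 𝕜))
            ((1 : Matrix (Fin ℓ) (Fin ℓ) 𝕜) ⊗ₖ (Ek 𝕜 ε ⊗ₖ (1 : Matrix (Fin n) (Fin n) 𝕜)))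
            ((1 : Matrix (Fin ℓ) (Fin ℓ) 𝕜) ⊗ₖ (1 : Matrix (Fin ε × Fin n) (Fin ε × Fin n) 𝕜))
            ((1 : Matrix (Fin ℓ) (Fin ℓ) 𝕜) ⊗ₖ (Fk 𝕜 ε ⊗ₖ (1 : Matrix (Fin n) (Fin n) 𝕜))))
          (Matrix.fromBlocks
            (Matrix.of fun (i : Fin ℓ × (Fin ε × Fin n))
                (j : (Fin (η+1) × Fin m) × (Fin ε × Fin n)) =>
              evec 𝕜 η j.1.1 * C j.1.2 i.1 * (if i.2 = j.2 then 1 else 0))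
            0 0 0)))
      (Matrix.fromCols 0
        (Matrix.fromCols 0
          (Matrix.fromBlocks
            ((Ek 𝕜 η ⊗ₖ (1 : Matrix (Fin m) (Fin m) 𝕜)) ⊗ₖ
              (1 : Matrix (Fin ε × Fin n) (Fin ε × Fin n) 𝕜))
            ((1 : Matrix (Fin η × Fin m) (Fin η × Fin m) 𝕜) ⊗ₖ
              (Ek 𝕜 ε ⊗ₖ (1 : Matrix (Fin n) (Fin n) 𝕜)))
            ((Fk 𝕜 η ⊗ₖ (1 : Matrix (Fin m) (Fin m) 𝕜)) ⊗ₖ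
              (1 : Matrix (Fin ε × Fin n) (Fin ε × Fin n) 𝕜))
            ((1 : Matrix (Fin η × Fin m) (Fin η × Fin m) 𝕜) ⊗ₖ
              (Fk 𝕜 ε ⊗ₖ (1 : Matrix (Fin n) (Fin n) 𝕜)))))))

/-- The 6×6 block matrix `ΔT` built from the blocks of the perturbation pencil. -/
def DeltaT (m n ℓ ε η : ℕ)
    (Δ12a Δ12b : Matrix (Fin (η+1) × Fin m) (Fin ℓ) 𝕜)
    (Δ13a Δ13b : Matrix (Fin (η+1) × Fin m) (Fin η × Fin m) 𝕜)
    (Δ21a Δ21b : Matrix (Fin ℓ) (Fin (ε+1) × Fin n) 𝕜)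
    (Δ22a Δ22b : Matrix (Fin ℓ) (Fin ℓ) 𝕜)
    (Δ23a Δ23b : Matrix (Fin ℓ) (Fin η × Fin m) 𝕜)
    (Δ31a Δ31b : Matrix (Fin ε × Fin n) (Fin (ε+1) × Fin n) 𝕜)
    (Δ32a Δ32b : Matrix (Fin ε × Fin n) (Fin ℓ) 𝕜) :
    Matrix (TRow m ℓ ε η n) (TCol m ℓ ε η n) 𝕜 :=
  Matrix.fromRows
    (Matrix.fromCols
      (Matrix.fromBlocks
        (Δ13aᵀ ⊗ₖ (1 : Matrix (Fin ℓ) (Fin ℓ) 𝕜))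
        ((1 : Matrix (Fin η × Fin m) (Fin η × Fin m) 𝕜) ⊗ₖ Δ22a)
        (Δ13bᵀ ⊗ₖ (1 : Matrix (Fin ℓ) (Fin ℓ) 𝕜))
        ((1 : Matrix (Fin η × Fin m) (Fin η × Fin m) 𝕜) ⊗ₖ Δ22b))
      (Matrix.fromCols 0
        (Matrix.fromBlocks 0 ((1 : Matrix (Fin η × Fin m) (Fin η × Fin m) 𝕜) ⊗ₖ Δ21a)
          0 ((1 : Matrix (Fin η × Fin m) (Fin η × Fin m) 𝕜) ⊗ₖ Δ21b))))
    (Matrix.fromRows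
      (Matrix.fromCols 0
        (Matrix.fromCols
          (Matrix.fromBlocks
            (Δ22aᵀ ⊗ₖ (1 : Matrix (Fin ε × Fin n) (Fin ε × Fin n) 𝕜))
            ((1 : Matrix (Fin ℓ) (Fin ℓ) 𝕜) ⊗ₖ Δ31a)
            (Δ22bᵀ ⊗ₖ (1 : Matrix (Fin ε × Fin n) (Fin ε × Fin n) 𝕜))
            ((1 : Matrix (Fin ℓ) (Fin ℓ) 𝕜) ⊗ₖ Δ31b))
          (Matrix.fromBlocks
            (Δ12aᵀ ⊗ₖ (1 : Matrix (Fin ε × Fin n) (Fin ε × Fin n) 𝕜)) 0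
            (Δ12bᵀ ⊗ₖ (1 : Matrix (Fin ε × Fin n) (Fin ε × Fin n) 𝕜)) 0)))
      (Matrix.fromCols
        (Matrix.fromBlocks 0 ((1 : Matrix (Fin η × Fin m) (Fin η × Fin m) 𝕜) ⊗ₖ Δ32a)
          0 ((1 : Matrix (Fin η × Fin m) (Fin η × Fin m) 𝕜) ⊗ₖ Δ32b))
        (Matrix.fromCols
          (Matrix.fromBlocks
            (Δ23aᵀ ⊗ₖ (1 : Matrix (Fin ε × Fin n) (Fin ε × Fin n) 𝕜)) 0
            (Δ23bᵀ ⊗ₖ (1 : Matrix (Fin ε × Fin n) (Fin ε × Fin n) 𝕜)) 0)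
          (Matrix.fromBlocks
            (Δ13aᵀ ⊗ₖ (1 : Matrix (Fin ε × Fin n) (Fin ε × Fin n) 𝕜))
            ((1 : Matrix (Fin η × Fin m) (Fin η × Fin m) 𝕜) ⊗ₖ Δ31a)
            (Δ13bᵀ ⊗ₖ (1 : Matrix (Fin ε × Fin n) (Fin ε × Fin n) 𝕜))
            ((1 : Matrix (Fin η × Fin m) (Fin η × Fin m) 𝕜) ⊗ₖ Δ31b)))))

/-- `(Λ_k(x) ⊗ I_m)` where `Λ_k(x) = (x^k, …, x, 1)ᵀ`. -/
def LamI (𝕜 : Type*) [RCLike 𝕜] (k m : ℕ) (x : 𝕜) :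
    Matrix (Fin (k+1) × Fin m) (Fin m) 𝕜 :=
  Matrix.of fun i j => if i.2 = j then x ^ (k - (i.1 : ℕ)) else 0

/-- `(A, B)` is controllable if the controllability matrix `[B, AB, …, A^{ℓ-1}B]`
has full rank `ℓ`. -/
def Controllable {ℓ n : ℕ} (A : Matrix (Fin ℓ) (Fin ℓ) 𝕜)
    (B : Matrix (Fin ℓ) (Fin n) 𝕜) : Prop :=
  (Matrix.of fun (i : Fin ℓ) (p : Fin ℓ × Fin n) => (A ^ (p.1 : ℕ) * B) i p.2).rank = ℓ

/-- `(A, C)` is observable if `(Aᵀ, Cᵀ)` is controllable. -/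
def Observable {ℓ m : ℕ} (A : Matrix (Fin ℓ) (Fin ℓ) 𝕜)
    (C : Matrix (Fin m) (Fin ℓ) 𝕜) : Prop :=
  Controllable Aᵀ Cᵀ

end

/-!
Entry `(a, b)` of `(Λ_η(λ) ⊗ I_m)ᵀ (Ma - λ Mb) (Λ_ε(λ) ⊗ I_n)` is
`∑_{i,j} λ^((η-i)+(ε-j)) (Ma - λ Mb)_{(i,a),(j,b)}`, so the coefficient of `λ^k` collects the
entries of `Ma` on the antidiagonal `(η-i)+(ε-j) = k` of the `(η+1) × (ε+1)` block grid and those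
of `Mb` on the antidiagonal of `k - 1`. An antidiagonal has at most `min (ε+1) (η+1)` cells, so
Cauchy–Schwarz on each antidiagonal, together with `‖x - y‖² ≤ 2(‖x‖² + ‖y‖²)`, gives (i), and
(iii) follows from `min (ε+1) (η+1) ≤ d`. For (ii), the hook made of the first block row and
the last block column of the grid meets every antidiagonal `k ≤ ε + η` exactly once: put `Q_k`
there in `Ma`, and `-Q_d` in the top-left block of `Mb`.
-/

open Finset Polynomial

section MonomialSum

variable {P R : Type*} [Fintype P] [CommRing R]

noncomputable def monomialSum (deg : P → ℕ) (u : P → R) : R[X] := ∑ p, monomial (deg p) (u p)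

lemma coeff_monomialSum (deg : P → ℕ) (u : P → R) (k : ℕ) :
    (monomialSum deg u).coeff k = ∑ p with deg p = k, u p := by
  simp [monomialSum, coeff_monomial, sum_filter]

lemma eval_monomialSum (deg : P → ℕ) (u : P → R) (x : R) :
    (monomialSum deg u).eval x = ∑ p, u p * x ^ deg p := by
  simp [monomialSum, eval_finsetSum]

lemma coeff_monomialSum_val {K : ℕ} (q : Fin K → R) (i : Fin K) :
    (monomialSum Fin.val q).coeff i = q i := by
  simp [coeff_monomialSum, Fin.val_inj, filter_eq']

lemma monomialSum_val_succ {K : ℕ} (q : Fin (K + 1) → R) :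
    monomialSum Fin.val q =
      monomialSum Fin.val (q ∘ Fin.castSucc) + monomial K (q (Fin.last K)) := by
  simp [monomialSum, Fin.sum_univ_castSucc]

lemma monomialSum_extend {K : Type*} [Fintype K] {σ : K → P} (hσ : σ.Injective)
    (deg : P → ℕ) (w : K → R) :
    monomialSum deg (Function.extend σ w 0) = monomialSum (deg ∘ σ) w :=
  (Fintype.sum_of_injective σ hσ _ _
    (fun p hp => by simp [Function.extend_apply' _ _ _ (by simpa using hp)])
    (fun j => by simp [hσ.extend_apply])).symm

lemma monomialSum_single [DecidableEq P] (deg : P → ℕ) (p₀ : P) (c : R) :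
    monomialSum deg (Pi.single p₀ c) = monomial (deg p₀) c := by
  rw [monomialSum, Fintype.sum_eq_single p₀ fun p hp => by simp [hp]]
  simp

end MonomialSum

section Norms

variable {𝕜 P : Type*} [RCLike 𝕜] [Fintype P]

lemma sum_norm_sq_extend {K : Type*} [Fintype K] {σ : K → P} (hσ : σ.Injective) (w : K → 𝕜) :
    ∑ p, ‖Function.extend σ w 0 p‖ ^ 2 = ∑ j, ‖w j‖ ^ 2 :=
  (Fintype.sum_of_injective σ hσ _ _
    (fun p hp => by simp [Function.extend_apply' _ _ _ (by simpa using hp)])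
    (fun j => by simp [hσ.extend_apply])).symm

lemma sum_norm_sq_fiber_le {deg : P → ℕ} {N : ℕ} (hN : ∀ k, #{p | deg p = k} ≤ N)
    (u : P → 𝕜) (s : Finset ℕ) :
    ∑ k ∈ s, ‖∑ p with deg p = k, u p‖ ^ 2 ≤ N * ∑ p, ‖u p‖ ^ 2 := by
  have fiber_le (k : ℕ) :
      ‖∑ p with deg p = k, u p‖ ^ 2 ≤ N * ∑ p with deg p = k, ‖u p‖ ^ 2 :=
    calc ‖∑ p with deg p = k, u p‖ ^ 2
        ≤ (∑ p with deg p = k, ‖u p‖) ^ 2 := by gcongr; exact norm_sum_le _ _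
      _ ≤ #{p | deg p = k} * ∑ p with deg p = k, ‖u p‖ ^ 2 := sq_sum_le_card_mul_sum_sq
      _ ≤ N * ∑ p with deg p = k, ‖u p‖ ^ 2 := by gcongr; exact hN k
  calc ∑ k ∈ s, ‖∑ p with deg p = k, u p‖ ^ 2
      ≤ ∑ k ∈ s, N * ∑ p with deg p = k, ‖u p‖ ^ 2 := sum_le_sum fun k _ => fiber_le k
    _ = N * ∑ p with deg p ∈ s, ‖u p‖ ^ 2 := by rw [← mul_sum, sum_fiberwise_eq_sum_filter]
    _ ≤ N * ∑ p, ‖u p‖ ^ 2 := by gcongr; exact subset_univ _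

lemma sum_norm_sq_le_of_monomialSum_eq {deg : P → ℕ} {N : ℕ} (hN : ∀ k, #{p | deg p = k} ≤ N)
    {K : ℕ} (q : Fin K → 𝕜) (u v : P → 𝕜)
    (h : monomialSum Fin.val q = monomialSum deg u - monomialSum (deg · + 1) v) :
    ∑ i, ‖q i‖ ^ 2 ≤ 2 * N * (∑ p, ‖u p‖ ^ 2 + ∑ p, ‖v p‖ ^ 2) := by
  have hN' (k : ℕ) : #{p | deg p + 1 = k} ≤ N :=
    (card_le_card (monotone_filter_right _ fun p hp => by omega)).trans (hN (k - 1))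
  have hq (i : Fin K) : q i = (∑ p with deg p = i, u p) - ∑ p with deg p + 1 = i, v p := by
    rw [← coeff_monomialSum_val q i, h, coeff_sub, coeff_monomialSum, coeff_monomialSum]
  calc ∑ i, ‖q i‖ ^ 2
      ≤ ∑ i : Fin K,
          2 * (‖∑ p with deg p = i, u p‖ ^ 2 + ‖∑ p with deg p + 1 = i, v p‖ ^ 2) := by
        refine sum_le_sum fun i _ => ?_
        rw [hq]
        calc _ ≤ (‖∑ p with deg p = i, u p‖ + ‖∑ p with deg p + 1 = i, v p‖) ^ 2 := by
              gcongr; exact norm_sub_le _ _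
          _ ≤ _ := add_sq_le
    _ = 2 * (∑ k ∈ range K, ‖∑ p with deg p = k, u p‖ ^ 2
          + ∑ k ∈ range K, ‖∑ p with deg p + 1 = k, v p‖ ^ 2) := by
        rw [← mul_sum, sum_add_distrib,
          Fin.sum_univ_eq_sum_range (fun k => ‖∑ p with deg p = k, u p‖ ^ 2),
          Fin.sum_univ_eq_sum_range (fun k => ‖∑ p with deg p + 1 = k, v p‖ ^ 2)]
    _ ≤ 2 * (N * ∑ p, ‖u p‖ ^ 2 + N * ∑ p, ‖v p‖ ^ 2) := by
        gcongr
        · exact sum_norm_sq_fiber_le hN u _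
        · exact sum_norm_sq_fiber_le (deg := (deg · + 1)) hN' v _
    _ = 2 * N * (∑ p, ‖u p‖ ^ 2 + ∑ p, ‖v p‖ ^ 2) := by ring

end Norms

section LamDeg

variable (ε η : ℕ)

def lamDeg (p : Fin (η + 1) × Fin (ε + 1)) : ℕ := (η - p.1) + (ε - p.2)

def lamHook (k : Fin (ε + η + 1)) : Fin (η + 1) × Fin (ε + 1) :=
  (⟨η - k, by omega⟩, ⟨min ε (ε + η - k), by omega⟩)

lemma lamDeg_comp_lamHook : lamDeg ε η ∘ lamHook ε η = Fin.val :=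
  funext fun k => by simp only [Function.comp_apply, lamDeg, lamHook]; omega

lemma lamHook_injective : (lamHook ε η).Injective :=
  Function.Injective.of_comp (f := lamDeg ε η) <| by
    rw [lamDeg_comp_lamHook]; exact Fin.val_injective

lemma card_lamDeg_fiber_le (k : ℕ) : #{p | lamDeg ε η p = k} ≤ min (ε + 1) (η + 1) := by
  have fiber_eq {p q : Fin (η + 1) × Fin (ε + 1)} (hp : p ∈ ({p | lamDeg ε η p = k} : Finset _))
      (hq : q ∈ ({p | lamDeg ε η p = k} : Finset _)) : (p.1 : ℕ) + p.2 = q.1 + q.2 := by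
    obtain ⟨-, hp⟩ := mem_filter.1 hp
    obtain ⟨-, hq⟩ := mem_filter.1 hq
    simp only [lamDeg] at hp hq
    omega
  refine le_min ?_ ?_
  · refine (card_le_card_of_injOn (t := univ) Prod.snd (fun p _ => mem_univ p.2)
      fun p hp q hq h => Prod.ext (Fin.ext ?_) h).trans_eq (by simp)
    have := fiber_eq hp hq
    rw [h] at this
    omega
  · refine (card_le_card_of_injOn (t := univ) Prod.fst (fun p _ => mem_univ p.1)
      fun p hp q hq h => Prod.ext h (Fin.ext ?_)).trans_eq (by simp)
    have := fiber_eq hp hq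
    rw [h] at this
    omega

lemma exists_monomialSum_eq {𝕜 : Type*} [RCLike 𝕜] (q : Fin (ε + η + 2) → 𝕜) :
    ∃ u v : Fin (η + 1) × Fin (ε + 1) → 𝕜,
      monomialSum Fin.val q = monomialSum (lamDeg ε η) u - monomialSum (lamDeg ε η · + 1) v ∧
      ∑ p, ‖u p‖ ^ 2 + ∑ p, ‖v p‖ ^ 2 = ∑ i, ‖q i‖ ^ 2 := by
  refine ⟨Function.extend (lamHook ε η) (q ∘ Fin.castSucc) 0, Pi.single 0 (-q (Fin.last _)),
    ?_, ?_⟩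
  · rw [monomialSum_extend (lamHook_injective ε η), lamDeg_comp_lamHook, monomialSum_single,
      monomialSum_val_succ, map_neg, sub_neg_eq_add]
    simp [lamDeg, add_comm η ε]
  · rw [sum_norm_sq_extend (lamHook_injective ε η),
      Fintype.sum_eq_single (0 : Fin (η + 1) × Fin (ε + 1)) fun p hp => by simp [hp],
      Fin.sum_univ_castSucc fun i => ‖q i‖ ^ 2]
    simp

end LamDeg

section Matrix

variable {𝕜 : Type*} [RCLike 𝕜]

lemma frobNorm_sq {p q : Type*} [Fintype p] [Fintype q] (M : Matrix p q 𝕜) :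
    frobNorm M ^ 2 = ∑ i, ∑ j, ‖M i j‖ ^ 2 :=
  Real.sq_sqrt (by positivity)

lemma frobNorm_sq_eq_sum_blocks {I J A B : Type*} [Fintype I] [Fintype J] [Fintype A]
    [Fintype B] (M : Matrix (I × A) (J × B) 𝕜) :
    frobNorm M ^ 2 = ∑ a, ∑ b, ∑ p : I × J, ‖M (p.1, a) (p.2, b)‖ ^ 2 := by
  simp only [frobNorm_sq, Fintype.sum_prod_type]
  rw [sum_comm]
  exact sum_congr rfl fun a _ => (sum_congr rfl fun i _ => sum_comm).trans sum_comm

lemma sum_frobNorm_sq {ι p q : Type*} [Fintype ι] [Fintype p] [Fintype q]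
    (Q : ι → Matrix p q 𝕜) : ∑ i, frobNorm (Q i) ^ 2 = ∑ a, ∑ b, ∑ i, ‖Q i a b‖ ^ 2 := by
  simp only [frobNorm_sq]
  rw [sum_comm]
  exact sum_congr rfl fun a _ => sum_comm

lemma pFrob_nonneg {p q : Type*} [Fintype p] [Fintype q] (P : Matrix p q 𝕜 × Matrix p q 𝕜) :
    0 ≤ pFrob P :=
  Real.sqrt_nonneg _

lemma pFrob_sq {p q : Type*} [Fintype p] [Fintype q] (P : Matrix p q 𝕜 × Matrix p q 𝕜) :
    pFrob P ^ 2 = frobNorm P.1 ^ 2 + frobNorm P.2 ^ 2 :=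
  Real.sq_sqrt (by positivity)

variable {m n ε η : ℕ}

lemma transpose_lamI_mul_mul_lamI_apply
    (M : Matrix (Fin (η + 1) × Fin m) (Fin (ε + 1) × Fin n) 𝕜) (x : 𝕜) (a : Fin m) (b : Fin n) :
    ((LamI 𝕜 η m x)ᵀ * M * LamI 𝕜 ε n x) a b = ∑ p, M (p.1, a) (p.2, b) * x ^ lamDeg ε η p := by
  simp only [LamI, Matrix.mul_apply, transpose_apply, of_apply, ite_mul, zero_mul,
    Fintype.sum_prod_type, sum_ite_eq', mem_univ, ↓reduceIte, mul_ite, sum_mul, mul_zero,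
    lamDeg, pow_add]
  rw [sum_comm]
  exact sum_congr rfl fun i _ => sum_congr rfl fun j _ => by ring

lemma lamI_sandwich_eq_iff (Ma Mb : Matrix (Fin (η + 1) × Fin m) (Fin (ε + 1) × Fin n) 𝕜)
    (Q : Fin (ε + η + 2) → Matrix (Fin m) (Fin n) 𝕜) :
    (∀ x : 𝕜, (LamI 𝕜 η m x)ᵀ * (Ma - x • Mb) * LamI 𝕜 ε n x = ∑ i, x ^ i.val • Q i) ↔
      ∀ a b, monomialSum Fin.val (Q · a b) =
        monomialSum (lamDeg ε η) (fun p => Ma (p.1, a) (p.2, b)) -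
          monomialSum (lamDeg ε η · + 1) (fun p => Mb (p.1, a) (p.2, b)) := by
  have lhs_apply (x : 𝕜) (a b) : ((LamI 𝕜 η m x)ᵀ * (Ma - x • Mb) * LamI 𝕜 ε n x) a b =
      (monomialSum (lamDeg ε η) (fun p => Ma (p.1, a) (p.2, b)) -
        monomialSum (lamDeg ε η · + 1) (fun p => Mb (p.1, a) (p.2, b))).eval x := by
    simp only [transpose_lamI_mul_mul_lamI_apply, eval_sub, eval_monomialSum, ← sum_sub_distrib]
    exact sum_congr rfl fun p _ => by
      simp only [Matrix.sub_apply, Matrix.smul_apply, smul_eq_mul]; ring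
  have rhs_apply (x : 𝕜) (a b) :
      (∑ i, x ^ i.val • Q i) a b = (monomialSum Fin.val (Q · a b)).eval x := by
    simp [eval_monomialSum, Matrix.sum_apply, mul_comm]
  constructor
  · intro h a b
    exact Polynomial.funext fun x => by rw [← lhs_apply, ← rhs_apply, h]
  · intro h x
    ext a b
    rw [lhs_apply, rhs_apply, h]

lemma sum_frobNorm_sq_le_of_lamI_sandwich
    {Ma Mb : Matrix (Fin (η + 1) × Fin m) (Fin (ε + 1) × Fin n) 𝕜}
    {Q : Fin (ε + η + 2) → Matrix (Fin m) (Fin n) 𝕜}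
    (h : ∀ x : 𝕜, (LamI 𝕜 η m x)ᵀ * (Ma - x • Mb) * LamI 𝕜 ε n x = ∑ i, x ^ i.val • Q i) :
    ∑ i, frobNorm (Q i) ^ 2 ≤ 2 * (min (ε + 1) (η + 1) : ℕ) * pFrob (Ma, Mb) ^ 2 := by
  rw [lamI_sandwich_eq_iff] at h
  rw [sum_frobNorm_sq, pFrob_sq, frobNorm_sq_eq_sum_blocks, frobNorm_sq_eq_sum_blocks,
    ← sum_add_distrib, mul_sum]
  refine sum_le_sum fun a _ => ?_
  rw [← sum_add_distrib, mul_sum]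
  exact sum_le_sum fun b _ =>
    sum_norm_sq_le_of_monomialSum_eq (card_lamDeg_fiber_le ε η) _ _ _ (h a b)

end Matrix

theorem statement13 {𝕜 : Type*} [RCLike 𝕜] (m n ε η : ℕ) :
    (∀ (Ma Mb : Matrix (Fin (η+1) × Fin m) (Fin (ε+1) × Fin n) 𝕜)
        (Q : Fin (ε + η + 2) → Matrix (Fin m) (Fin n) 𝕜),
        (∀ x : 𝕜, (LamI 𝕜 η m x)ᵀ * (Ma - x • Mb) * (LamI 𝕜 ε n x) =
          ∑ i, x ^ i.val • Q i) →
        Real.sqrt (∑ i, frobNorm (Q i) ^ 2) ≤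
          Real.sqrt (2 * (min (ε + 1) (η + 1) : ℝ)) * pFrob (Ma, Mb)) ∧
    (∀ Q : Fin (ε + η + 2) → Matrix (Fin m) (Fin n) 𝕜,
        ∃ Ma Mb : Matrix (Fin (η+1) × Fin m) (Fin (ε+1) × Fin n) 𝕜,
          (∀ x : 𝕜, (LamI 𝕜 η m x)ᵀ * (Ma - x • Mb) * (LamI 𝕜 ε n x) =
            ∑ i, x ^ i.val • Q i) ∧
          pFrob (Ma, Mb) = Real.sqrt (∑ i, frobNorm (Q i) ^ 2)) ∧
    (∀ (Ma Mb : Matrix (Fin (η+1) × Fin m) (Fin (ε+1) × Fin n) 𝕜)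
        (Q : Fin (ε + η + 2) → Matrix (Fin m) (Fin n) 𝕜),
        (∀ x : 𝕜, (LamI 𝕜 η m x)ᵀ * (Ma - x • Mb) * (LamI 𝕜 ε n x) =
          ∑ i, x ^ i.val • Q i) →
        Real.sqrt (∑ i, frobNorm (Q i) ^ 2) / Real.sqrt (2 * ((ε : ℝ) + (η : ℝ) + 1)) ≤
          pFrob (Ma, Mb)) := by
  refine ⟨fun Ma Mb Q h => ?_, fun Q => ?_, fun Ma Mb Q h => ?_⟩
  · rw [← Real.sqrt_sq (pFrob_nonneg (Ma, Mb)), ← Real.sqrt_mul (by positivity)]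
    exact Real.sqrt_le_sqrt ((sum_frobNorm_sq_le_of_lamI_sandwich h).trans_eq (by push_cast; ring))
  · choose u v hpoly hnorm using fun a b => exists_monomialSum_eq ε η (Q · a b)
    refine ⟨Matrix.of fun r c => u r.2 c.2 (r.1, c.1), Matrix.of fun r c => v r.2 c.2 (r.1, c.1),
      (lamI_sandwich_eq_iff _ _ Q).2 hpoly, ?_⟩
    rw [pFrob, frobNorm_sq_eq_sum_blocks, frobNorm_sq_eq_sum_blocks, sum_frobNorm_sq,
      ← sum_add_distrib]
    simp only [← sum_add_distrib, Matrix.of_apply, hnorm]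
  · rw [div_le_iff₀ (by positivity), ← Real.sqrt_sq (pFrob_nonneg (Ma, Mb)),
      ← Real.sqrt_mul (by positivity)]
    refine Real.sqrt_le_sqrt ((sum_frobNorm_sq_le_of_lamI_sandwich h).trans ?_)
    rw [mul_comm (pFrob _ ^ 2)]
    gcongr
    exact_mod_cast (by omega : min (ε + 1) (η + 1) ≤ ε + η + 1)
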